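/- The maps T⁻¹: (ρ, m, S) ↦ (r, v, T) (state variables to dual variables given by the gradient of total energy) and T: (r, v, T) ↦ (ρ, m, S) as defined by the explicit formulas are mutually inverse on the domain ρ > 0, T > 0. -/

import Mathlib

/-- The maps `𝔗⁻¹ : (ρ, m, S) ↦ (r, v, T)` (state to dual variables) and
`𝔗 : (r, v, T) ↦ (ρ, m, S)`, given by the explicit formulas, are mutually inverse
on the domain `ρ > 0`, `T > 0`. -/
theorem dual_variable_transforms_inverse (γ cv : ℝ) (hγ : 1 < γ) (hcv : 0 < cv)
    (d : ℕ) (hd : 1 ≤ d) :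
    (∀ (ρ : ℝ) (m : EuclideanSpace ℝ (Fin d)) (S : ℝ), 0 < ρ →
      ∀ r v T, r = (γ - S / (ρ * cv)) * (ρ ^ (γ - 1) / (γ - 1)) * Real.exp (S / (ρ * cv))
                   - ‖m‖ ^ 2 / (2 * ρ ^ 2) →
        v = (ρ:ℝ)⁻¹ • m →
        T = (1 / cv) * (ρ ^ (γ - 1) / (γ - 1)) * Real.exp (S / (ρ * cv)) →
        0 < T ∧
        Real.exp ((-(γ * cv * T) + cv * T * Real.log ((γ - 1) * cv * T) + r + ‖v‖ ^ 2 / 2)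
            / ((γ - 1) * cv * T)) = ρ ∧
        ρ • v = m ∧
        ρ * cv * Real.log (cv * (γ - 1) * T / ρ ^ (γ - 1)) = S) ∧
    (∀ (r : ℝ) (v : EuclideanSpace ℝ (Fin d)) (T : ℝ), 0 < T →
      ∀ (ρ : ℝ) (m : EuclideanSpace ℝ (Fin d)) (S : ℝ),
        ρ = Real.exp ((-(γ * cv * T) + cv * T * Real.log ((γ - 1) * cv * T) + r + ‖v‖ ^ 2 / 2)
            / ((γ - 1) * cv * T)) →
        m = ρ • v →
        S = ρ * cv * Real.log (cv * (γ - 1) * T / ρ ^ (γ - 1)) →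
        0 < ρ ∧
        (γ - S / (ρ * cv)) * (ρ ^ (γ - 1) / (γ - 1)) * Real.exp (S / (ρ * cv))
            - ‖m‖ ^ 2 / (2 * ρ ^ 2) = r ∧
        (ρ:ℝ)⁻¹ • m = v ∧
        (1 / cv) * (ρ ^ (γ - 1) / (γ - 1)) * Real.exp (S / (ρ * cv)) = T) := by
  have hγ1 : (0:ℝ) < γ - 1 := by linarith
  have hγ1' : (γ:ℝ) - 1 ≠ 0 := ne_of_gt hγ1
  have hcv' : cv ≠ 0 := ne_of_gt hcv
  constructor
  · intro ρ m S hρ r v T hr hv hT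
    have hρ' : ρ ≠ 0 := ne_of_gt hρ
    have hp : 0 < ρ ^ (γ - 1) := Real.rpow_pos_of_pos hρ _
    have hT0 : 0 < T := by
      rw [hT]; positivity
    have hcvT : cv * T = ρ ^ (γ - 1) / (γ - 1) * Real.exp (S / (ρ * cv)) := by
      rw [hT]; field_simp
    have hlog : Real.log ((γ - 1) * cv * T) = (γ - 1) * Real.log ρ + S / (ρ * cv) := by
      have h1 : (γ - 1) * cv * T = ρ ^ (γ - 1) * Real.exp (S / (ρ * cv)) := by
        rw [mul_assoc, hcvT]; field_simp
      rw [h1, Real.log_mul (ne_of_gt hp) (Real.exp_ne_zero _), Real.log_rpow hρ,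
        Real.log_exp]
    have hvnorm : ‖v‖ ^ 2 = ‖m‖ ^ 2 / ρ ^ 2 := by
      rw [hv, norm_smul, mul_pow, norm_inv, Real.norm_eq_abs, abs_of_pos hρ]
      field_simp
    refine ⟨hT0, ?_, ?_, ?_⟩
    · have hnum : -(γ * cv * T) + cv * T * Real.log ((γ - 1) * cv * T) + r + ‖v‖ ^ 2 / 2
          = (γ - 1) * cv * T * Real.log ρ := by
        rw [hlog, hr, hvnorm]
        have hB : (γ - S / (ρ * cv)) * (ρ ^ (γ - 1) / (γ - 1)) * Real.exp (S / (ρ * cv))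
            = (γ - S / (ρ * cv)) * (cv * T) := by rw [hcvT]; ring
        rw [hB]; ring
      have hden : (γ - 1) * cv * T ≠ 0 := by positivity
      rw [hnum, mul_comm ((γ - 1) * cv * T) (Real.log ρ), mul_div_assoc, div_self hden,
        mul_one, Real.exp_log hρ]
    · rw [hv, smul_smul, mul_inv_cancel₀ hρ', one_smul]
    · have h1 : cv * (γ - 1) * T / ρ ^ (γ - 1) = Real.exp (S / (ρ * cv)) := by
        rw [mul_comm cv (γ - 1), mul_assoc, hcvT]; field_simp
      rw [h1, Real.log_exp]; field_simp
  · intro r v T hT ρ m S hρdef hm hS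
    have hρ : 0 < ρ := hρdef ▸ Real.exp_pos _
    have hρ' : ρ ≠ 0 := ne_of_gt hρ
    have hp : 0 < ρ ^ (γ - 1) := Real.rpow_pos_of_pos hρ _
    have hL : S / (ρ * cv) = Real.log (cv * (γ - 1) * T / ρ ^ (γ - 1)) := by
      rw [hS]; field_simp
    have hexp : Real.exp (S / (ρ * cv)) = cv * (γ - 1) * T / ρ ^ (γ - 1) := by
      rw [hL, Real.exp_log (by positivity)]
    have hlogρ : Real.log ρ
        = (-(γ * cv * T) + cv * T * Real.log ((γ - 1) * cv * T) + r + ‖v‖ ^ 2 / 2)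
          / ((γ - 1) * cv * T) := by rw [hρdef, Real.log_exp]
    have hmnorm : ‖m‖ ^ 2 = ρ ^ 2 * ‖v‖ ^ 2 := by
      rw [hm, norm_smul, mul_pow, Real.norm_eq_abs, abs_of_pos hρ]
    refine ⟨hρ, ?_, ?_, ?_⟩
    · have hLd : S / (ρ * cv) = Real.log ((γ - 1) * cv * T) - (γ - 1) * Real.log ρ := by
        rw [hL, Real.log_div (by positivity) (ne_of_gt hp), Real.log_rpow hρ,
          mul_comm cv (γ - 1)]
      have hkey : (γ - 1) * Real.log ρ * (cv * T)
          = -(γ * cv * T) + cv * T * Real.log ((γ - 1) * cv * T) + r + ‖v‖ ^ 2 / 2 := by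
        rw [hlogρ]; field_simp
      rw [hexp, hmnorm, hLd]
      field_simp
      linear_combination 2 * hkey
    · rw [hm, smul_smul, inv_mul_cancel₀ hρ', one_smul]
    · rw [hexp]; field_simp
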